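/- arXiv:2508.00181 — 2 statements merged into one kernel-verified Lean document; each statement's English description precedes it below -/
import Mathlib

section
/- The total Average Forest value of all players equals the productivity of the organisational situation: Σ_{i∈N} AF_i(N,v,Γ) = Prod(N,v,Γ), where Prod(N,v,Γ) is the average over all maximal spanning forests F of Γ of Σ_{K ∈ components of F} v(K). -/
open scoped Classical
open Finset

section Preamble

variable {V : Type*} [Fintype V] [DecidableEq V]

/-- Adjacency relation of a digraph given by its arc set. -/
def Adj (A : Finset (V × V)) (i j : V) : Prop := (i, j) ∈ A

/-- A digraph is circuit-free if it contains no directed cycle. -/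
def CircuitFree (A : Finset (V × V)) : Prop :=
  ∀ i : V, ¬ Relation.TransGen (Adj A) i i

/-- In-degree of a node. -/
def inDeg (A : Finset (V × V)) (j : V) : ℕ :=
  (A.filter (fun a => a.2 = j)).card

/-- Weak connectivity (chains, ignoring orientation). -/
def WConn (A : Finset (V × V)) (i j : V) : Prop :=
  Relation.ReflTransGen (fun a b => (a, b) ∈ A ∨ (b, a) ∈ A) i j

/-- The weakly connected component of `i`, as a finset. -/
noncomputable def compF (A : Finset (V × V)) (i : V) : Finset V :=
  Finset.univ.filter (fun j => WConn A i j)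

/-- `IsPath A p` : `p` is a (nonempty) directed path along arcs of `A`. -/
def IsPath (A : Finset (V × V)) : List V → Prop
  | [] => False
  | [_] => True
  | i :: j :: l => (i, j) ∈ A ∧ IsPath A (j :: l)

/-- The digraph `A` restricted to the node set `K` is an arborescence:
there is a root `r ∈ K` with a unique directed path from `r` to every node of `K`. -/
def IsArbOn (A : Finset (V × V)) (K : Set V) : Prop :=
  ∃ r ∈ K, ∀ i ∈ K, ∃! p : List V,
    IsPath A p ∧ p.head? = some r ∧ p.getLast? = some i

/-- A forest: every weakly connected component is an arborescence. -/
def IsForest (A : Finset (V × V)) : Prop :=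
  ∀ i : V, IsArbOn A {j | WConn A i j}

/-- `F` is a maximal spanning forest of the digraph `A`. -/
def IsMaxSpanningForest (A F : Finset (V × V)) : Prop :=
  F ⊆ A ∧ IsForest F ∧ ∀ a ∈ A, a ∉ F → ¬ IsForest (insert a F)

/-- The collection of all maximal spanning forests of `A`. -/
noncomputable def maxForests (A : Finset (V × V)) : Finset (Finset (V × V)) :=
  A.powerset.filter (fun F => IsMaxSpanningForest A F)

/-- `S̄_F(i)` : the node `i` together with all its successors in `F`. -/
noncomputable def succSet (F : Finset (V × V)) (i : V) : Finset V :=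
  Finset.univ.filter (fun j => Relation.ReflTransGen (Adj F) i j)

/-- `Ŝ_F(i)` : the immediate successors of `i` in `F`. -/
noncomputable def immSucc (F : Finset (V × V)) (i : V) : Finset V :=
  Finset.univ.filter (fun j => (i, j) ∈ F)

/-- Marginal contribution of player `i` with respect to the forest `F`. -/
noncomputable def marg (v : Finset V → ℝ) (F : Finset (V × V)) (i : V) : ℝ :=
  v (succSet F i) - ∑ j ∈ immSucc F i, v (succSet F j)

/-- The Average Forest leadership measure. -/
noncomputable def AF (v : Finset V → ℝ) (A : Finset (V × V)) (i : V) : ℝ :=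
  (∑ F ∈ maxForests A, marg v F i) / (maxForests A).card

/-- The node sets of the arborescence components of a forest `F`. -/
noncomputable def comps (F : Finset (V × V)) : Finset (Finset V) :=
  Finset.univ.image (fun i => compF F i)

/-- Productivity of the organisational situation. -/
noncomputable def Productivity (v : Finset V → ℝ) (A : Finset (V × V)) : ℝ :=
  (∑ F ∈ maxForests A, ∑ K ∈ comps F, v K) / (maxForests A).card

/-- Superadditivity of a TU game. -/
def Superadditive (v : Finset V → ℝ) : Prop :=
  ∀ S Q : Finset V, Disjoint S Q → v S + v Q ≤ v (S ∪ Q)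

/-- Weak connectedness of the digraph. -/
def WeaklyConnected (A : Finset (V × V)) : Prop :=
  ∀ i j : V, WConn A i j

/-- Quasi-strong connectedness: existence of a root reaching every node. -/
def HasRoot (A : Finset (V × V)) : Prop :=
  ∃ r : V, ∀ i : V, Relation.ReflTransGen (Adj A) r i

end Preamble

/-! For a fixed forest `F` the marginal contributions telescope: every non-root node `j` has a
unique predecessor in `F`, so `v (S̄_F(j))` is added once (in `m_j`) and subtracted once (in the
marginal contribution of its predecessor). Only the terms `v (S̄_F(r))` of the roots survive, and
the successor set of a root is its component, the roots being in bijection with the components.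
Averaging over `F` gives the claim. -/

section Paths

variable {V : Type*} {F : Finset (V × V)} {p : List V} {i j q : V}

theorem isPath_iff_isChain : ∀ {p : List V}, IsPath F p ↔ p ≠ [] ∧ p.IsChain (Adj F)
  | [] => by simp [IsPath]
  | [_] => by simp [IsPath]
  | _ :: b :: l => by
    simp [IsPath, isPath_iff_isChain (p := b :: l), List.isChain_cons_cons, Adj]

theorem IsPath.concat (hp : IsPath F p) (hq : p.getLast? = some q) (hqj : (q, j) ∈ F) :
    IsPath F (p ++ [j]) := by
  rw [isPath_iff_isChain] at hp ⊢
  refine ⟨by simp, hp.2.append (List.isChain_singleton j) ?_⟩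
  simpa [hq, Adj] using hqj

theorem IsPath.reflTransGen (hp : IsPath F p) (hi : p.head? = some i) (hj : p.getLast? = some j) :
    Relation.ReflTransGen (Adj F) i j := by
  obtain ⟨hne, hchain⟩ := isPath_iff_isChain.1 hp
  have := List.relationReflTransGen_of_exists_isChain p hchain hne
  rwa [(List.head_eq_iff_head?_eq_some hne).2 hi, (List.getLast_eq_iff_getLast?_eq_some hne).2 hj]
    at this

end Paths

section Arborescence

variable {V : Type*} {F : Finset (V × V)} {K : Set V} {i j : V}

theorem WConn.of_reflTransGen (h : Relation.ReflTransGen (Adj F) i j) : WConn F i j :=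
  Relation.ReflTransGen.mono (fun _ _ => Or.inl) _ _ h

theorem IsArbOn.exists_root (h : IsArbOn F K) (hK : ∀ q j, (q, j) ∈ F → j ∈ K → q ∈ K) :
    ∃ r ∈ K, (∀ q, (q, r) ∉ F) ∧ ∀ j ∈ K, Relation.ReflTransGen (Adj F) r j := by
  obtain ⟨r, hrK, hu⟩ := h
  refine ⟨r, hrK, fun q hq => ?_, fun j hj => ?_⟩
  · -- a predecessor `q` of `r` would give a second path `p ++ [r]` from `r` to `r`, besides `[r]`
    obtain ⟨p, ⟨hp, hph, hpl⟩, -⟩ := hu q (hK q r hq hrK)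
    obtain ⟨_, -, huniq⟩ := hu r hrK
    have hcycle : p ++ [r] = [r] :=
      (huniq _ ⟨hp.concat hpl hq, by simp [List.head?_append, hph], by simp⟩).trans
        (huniq [r] ⟨trivial, rfl, rfl⟩).symm
    exact (isPath_iff_isChain.1 hp).1 (by simpa using hcycle)
  · obtain ⟨p, ⟨hp, hph, hpl⟩, -⟩ := hu j hj
    exact hp.reflTransGen hph hpl

theorem IsForest.eq_of_mem_of_mem (hF : IsForest F) {q₁ q₂ : V} (h₁ : (q₁, j) ∈ F)
    (h₂ : (q₂, j) ∈ F) : q₁ = q₂ := by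
  obtain ⟨r, -, hu⟩ := hF j
  obtain ⟨p₁, ⟨hp₁, hph₁, hpl₁⟩, -⟩ := hu q₁ (Relation.ReflTransGen.single (Or.inr h₁))
  obtain ⟨p₂, ⟨hp₂, hph₂, hpl₂⟩, -⟩ := hu q₂ (Relation.ReflTransGen.single (Or.inr h₂))
  obtain ⟨_, -, huniq⟩ := hu j Relation.ReflTransGen.refl
  have hp : p₁ = p₂ := List.append_cancel_right <|
    (huniq _ ⟨hp₁.concat hpl₁ h₁, by simp [List.head?_append, hph₁], by simp⟩).trans
      (huniq _ ⟨hp₂.concat hpl₂ h₂, by simp [List.head?_append, hph₂], by simp⟩).symm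
  rw [hp, hpl₂] at hpl₁
  exact (Option.some_injective _ hpl₁).symm

end Arborescence

section Roots

variable {V : Type*} [Fintype V] {F : Finset (V × V)} {i r : V}

noncomputable def roots (F : Finset (V × V)) : Finset V :=
  univ.filter fun r => ∀ q, (q, r) ∉ F

theorem eq_of_reflTransGen_of_mem_roots (h : Relation.ReflTransGen (Adj F) i r)
    (hr : r ∈ roots F) : i = r := by
  rcases h.cases_tail with rfl | ⟨c, -, hc⟩
  · rfl
  · exact absurd hc ((mem_filter.1 hr).2 c)

theorem injOn_succSet_roots : Set.InjOn (succSet F) (roots F) := by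
  intro r _ r' hr' h
  have : r' ∈ succSet F r := by rw [h]; exact mem_filter.2 ⟨mem_univ _, .refl⟩
  exact eq_of_reflTransGen_of_mem_roots (by simpa [succSet] using this) hr'

theorem IsForest.exists_root (hF : IsForest F) (i : V) :
    ∃ r ∈ roots F, compF F i = succSet F r := by
  obtain ⟨r, hrK, hroot, hreach⟩ := (hF i).exists_root fun _ _ hq hj => hj.tail (Or.inr hq)
  refine ⟨r, by simpa [roots] using hroot, ?_⟩
  ext j
  simp only [compF, succSet, mem_filter, mem_univ, true_and]
  exact ⟨hreach j, fun h => Relation.ReflTransGen.trans hrK (WConn.of_reflTransGen h)⟩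

theorem IsForest.compF_eq_succSet (hF : IsForest F) (hr : r ∈ roots F) :
    compF F r = succSet F r := by
  obtain ⟨r', hr', h⟩ := hF.exists_root r
  have : r ∈ succSet F r' := by rw [← h]; exact mem_filter.2 ⟨mem_univ _, .refl⟩
  obtain rfl := eq_of_reflTransGen_of_mem_roots (by simpa [succSet] using this) hr
  exact h

variable [DecidableEq V]

theorem IsForest.image_succSet_roots (hF : IsForest F) :
    (roots F).image (succSet F) = comps F := by
  ext K
  simp only [comps, mem_image, mem_univ, true_and]
  constructor
  · rintro ⟨r, hr, rfl⟩
    exact ⟨r, hF.compF_eq_succSet hr⟩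
  · rintro ⟨i, rfl⟩
    obtain ⟨r, hr, h⟩ := hF.exists_root i
    exact ⟨r, hr, h.symm⟩

theorem IsForest.sum_immSucc_eq_sum_compl_roots (hF : IsForest F) {M : Type*} [AddCommMonoid M]
    (f : V → M) :
    ∑ i, ∑ j ∈ immSucc F i, f j = ∑ j ∈ (roots F)ᶜ, f j := by
  rw [← sum_biUnion]
  · congr 1
    ext j
    simp [immSucc, roots]
  · intro i _ i' _ hne
    rw [Function.onFun, disjoint_left]
    intro j hj hj'
    exact hne (hF.eq_of_mem_of_mem (by simpa [immSucc] using hj) (by simpa [immSucc] using hj'))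

theorem IsForest.sum_marg_eq_sum_comps (hF : IsForest F) (v : Finset V → ℝ) :
    ∑ i, marg v F i = ∑ K ∈ comps F, v K :=
  calc ∑ i, marg v F i
      = ∑ i, v (succSet F i) - ∑ i, ∑ j ∈ immSucc F i, v (succSet F j) := sum_sub_distrib ..
    _ = ∑ r ∈ roots F, v (succSet F r) := by
      rw [hF.sum_immSucc_eq_sum_compl_roots, ← sum_add_sum_compl (roots F), add_sub_cancel_right]
    _ = ∑ K ∈ comps F, v K := by
      rw [← hF.image_succSet_roots, sum_image injOn_succSet_roots]

end Roots

theorem sum_AF_eq_productivity_general {V : Type*} [Fintype V] [DecidableEq V]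
    (A : Finset (V × V)) (v : Finset V → ℝ) :
    ∑ i : V, AF v A i = Productivity v A := by
  simp only [AF, Productivity, ← sum_div]
  rw [sum_comm]
  exact congrArg (· / _) <| sum_congr rfl fun F hF =>
    (mem_filter.1 hF).2.2.1.sum_marg_eq_sum_comps v

/-- the total Average Forest value equals the productivity of the
organisational situation. -/
theorem sum_AF_eq_productivity {V : Type*} [Fintype V] [DecidableEq V]
    (A : Finset (V × V)) (hA : CircuitFree A) (v : Finset V → ℝ) :
    ∑ i : V, AF v A i = Productivity v A :=
  sum_AF_eq_productivity_general A v
end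

section
/- Locality of the Average Forest measure: for an arc (i₀,j₀) of Γ and a node k whose local digraph is unchanged by removing (i₀,j₀) — i.e., Γ(k) = Γ'(k) where Γ' = Γ−(i₀,j₀) — one has AF_k(N,v,Γ) = AF_k(N,v,Γ'). Here the local digraph Γ(k) has node set S̄_Γ(k) ∪ P̂_Γ(S_Γ(k)) and arc set consisting of the arcs of Γ among S̄_Γ(k) together with all arcs (i,j) of Γ with i an immediate predecessor of some successor of k and j ∈ S_Γ(k). -/
open scoped Classical
open Finset

/-- The strict successors of `k`. -/
noncomputable def succS {V : Type*} [Fintype V] [DecidableEq V]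
    (A : Finset (V × V)) (k : V) : Finset V :=
  Finset.univ.filter (fun j => Relation.TransGen (Adj A) k j)

/-- Node set of the local digraph `Γ(k)` : `k` together with its successors and with all
immediate predecessors of its successors. -/
noncomputable def localNodes {V : Type*} [Fintype V] [DecidableEq V]
    (A : Finset (V × V)) (k : V) : Finset V :=
  insert k (succS A k) ∪ Finset.univ.filter (fun i => ∃ j ∈ succS A k, (i, j) ∈ A)

/-- Arc set of the local digraph `Γ(k)` : arcs among `S̄_Γ(k)` together with all arcs
`(i, j)` with `j` a successor of `k` (so `i` is an immediate predecessor of a successor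
of `k`). -/
noncomputable def localArcs {V : Type*} [Fintype V] [DecidableEq V]
    (A : Finset (V × V)) (k : V) : Finset (V × V) :=
  A.filter (fun a =>
    (a.1 ∈ insert k (succS A k) ∧ a.2 ∈ insert k (succS A k)) ∨ a.2 ∈ succS A k)

/-!
A maximal spanning forest of a circuit-free digraph amounts to a choice of one in-arc for every
node that has one. Forgetting the in-arc of `j₀` therefore maps the maximal forests of `Γ` and
of `Γ - (i₀, j₀)` onto one and the same set, the maximal forests of `Γ` stripped of the in-arcs
of `j₀`, and all fibres of either map have the same size. If the local digraph of `k` is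
unchanged, `j₀` is not a successor of `k`, so the marginal contribution of `k` does not see the
in-arc of `j₀`; both averages are then the average over the common image.
-/

section Paths

variable {V : Type*} {A F : Finset (V × V)}

lemma CircuitFree.mono (hA : CircuitFree A) (h : F ⊆ A) : CircuitFree F :=
  fun i hi => hA i (Relation.TransGen.mono (fun _ _ hab => h hab) _ _ hi)

lemma CircuitFree.wellFounded [Finite V] (h : CircuitFree F) : WellFounded (Adj F) := by
  have : Std.Irrefl (Relation.TransGen (Adj F)) := ⟨h⟩
  exact Subrelation.wf (Relation.TransGen.single ·) (Finite.wellFounded_of_trans_of_irrefl _)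

lemma WConn.symm {i j : V} (h : WConn F i j) : WConn F j i :=
  Relation.ReflTransGen.mono (fun _ _ hab => hab.symm) _ _ (Relation.ReflTransGen.swap _ _ h)

lemma exists_root_reflTransGen [Finite V] (hF : CircuitFree F) (i : V) :
    ∃ r, (∀ x, (x, r) ∉ F) ∧ Relation.ReflTransGen (Adj F) r i := by
  obtain ⟨r, hri, hmin⟩ :=
    hF.wellFounded.has_min {r | Relation.ReflTransGen (Adj F) r i} ⟨i, .refl⟩
  exact ⟨r, fun x hx => hmin x (Relation.ReflTransGen.head hx hri) hx, hri⟩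

lemma isPath_iff {p : List V} : IsPath F p ↔ p ≠ [] ∧ p.IsChain (Adj F) := by
  match p with
  | [] => simp [IsPath]
  | [_] => simp [IsPath]
  | _ :: _ :: _ => rw [IsPath, isPath_iff, List.isChain_cons_cons]; simp [Adj]

lemma isPath_append_singleton {p : List V} {j : V} (hp : p ≠ []) :
    IsPath F (p ++ [j]) ↔ IsPath F p ∧ ∀ x ∈ p.getLast?, (x, j) ∈ F := by
  simp [isPath_iff, List.isChain_append, hp, Adj]

lemma exists_isPath_of_reflTransGen {r j : V} (h : Relation.ReflTransGen (Adj F) r j) :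
    ∃ p, IsPath F p ∧ p.head? = some r ∧ p.getLast? = some j := by
  obtain ⟨l, hl, hlast⟩ := List.exists_isChain_cons_of_relationReflTransGen h
  exact ⟨r :: l, isPath_iff.2 ⟨List.cons_ne_nil _ _, hl⟩, rfl, by
    rw [List.getLast?_eq_some_getLast (List.cons_ne_nil _ _), hlast]⟩

end Paths

section Forest

variable {V : Type*} [DecidableEq V] {A F : Finset (V × V)}

lemma one_le_inDeg_iff {j : V} : 1 ≤ inDeg F j ↔ ∃ x, (x, j) ∈ F := by
  simp [inDeg, Nat.one_le_iff_ne_zero]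

lemma inDeg_le_one_iff {j : V} : inDeg F j ≤ 1 ↔ ∀ a b, (a, j) ∈ F → (b, j) ∈ F → a = b := by
  simp only [inDeg, card_le_one, mem_filter, and_imp, Prod.forall]
  exact ⟨fun h a b ha hb => congrArg Prod.fst (h a j ha rfl b j hb rfl),
    fun h a _ ha hj b _ hb hj' => by subst hj hj'; rw [h a b ha hb]⟩

lemma inDeg_mono (h : F ⊆ A) (j : V) : inDeg F j ≤ inDeg A j :=
  card_le_card (filter_subset_filter _ h)

lemma inDeg_insert {e : V × V} (he : e ∉ F) (j : V) :
    inDeg (insert e F) j = inDeg F j + if e.2 = j then 1 else 0 := by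
  rw [inDeg, inDeg, filter_insert]
  split_ifs
  · exact card_insert_of_notMem fun h => he (mem_filter.1 h).1
  · rfl

lemma reflTransGen_of_wConn (hd : ∀ j, inDeg F j ≤ 1) {r c j : V} (hr : ∀ x, (x, r) ∉ F)
    (hrc : Relation.ReflTransGen (Adj F) r c) (hcj : WConn F c j) :
    Relation.ReflTransGen (Adj F) r j := by
  induction hcj with
  | refl => exact hrc
  | tail _ hbd ih =>
    rcases hbd with hbd | hdb
    · exact ih.tail hbd
    · -- a backward arc `(d, b)` is the unique in-arc of `b`, which lies on the path from `r`
      rcases ih.cases_tail with rfl | ⟨x, hrx, hxb⟩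
      · exact absurd hdb (hr _)
      · rwa [inDeg_le_one_iff.1 (hd _) _ _ hdb hxb]

lemma isPath_unique (hd : ∀ j, inDeg F j ≤ 1) {r : V} (hr : ∀ x, (x, r) ∉ F) {p q : List V}
    (hp : IsPath F p) (hq : IsPath F q) (hpr : p.head? = some r) (hqr : q.head? = some r)
    (hpq : p.getLast? = q.getLast?) : p = q := by
  induction p using List.reverseRecOn generalizing q with
  | nil => simp [IsPath] at hp
  | append_singleton p j ih =>
    obtain rfl | ⟨q, j', rfl⟩ := q.eq_nil_or_concat'
    · simp [IsPath] at hq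
    obtain rfl : j = j' := by simpa using hpq
    have ne_root : ∀ s, s ≠ [] → IsPath F (s ++ [j]) → j ≠ r := by
      intro s hs hsj hjr
      exact hr _ (hjr ▸ ((isPath_append_singleton hs).1 hsj).2 _
        (List.getLast?_eq_some_getLast hs))
    rcases eq_or_ne p [] with rfl | hp₀ <;> rcases eq_or_ne q [] with rfl | hq₀
    · rfl
    · exact absurd (by simpa using hpr) (ne_root q hq₀ hq)
    · exact absurd (by simpa using hqr) (ne_root p hp₀ hp)
    rw [isPath_append_singleton hp₀] at hp
    rw [isPath_append_singleton hq₀] at hq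
    have hx := List.getLast?_eq_some_getLast hp₀
    have hy := List.getLast?_eq_some_getLast hq₀
    have hxy := inDeg_le_one_iff.1 (hd j) _ _ (hp.2 _ hx) (hq.2 _ hy)
    rw [List.head?_append_of_ne_nil _ hp₀] at hpr
    rw [List.head?_append_of_ne_nil _ hq₀] at hqr
    rw [ih hp.1 hq.1 hpr hqr (by rw [hx, hy, hxy])]

theorem isForest_of_inDeg_le_one [Finite V] (hF : CircuitFree F) (hd : ∀ j, inDeg F j ≤ 1) :
    IsForest F := by
  intro i
  obtain ⟨r, hr, hri⟩ := exists_root_reflTransGen hF i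
  have hir : WConn F i r := WConn.symm (Relation.ReflTransGen.mono (fun _ _ => Or.inl) _ _ hri)
  refine ⟨r, hir, fun j hij => ?_⟩
  obtain ⟨p, hp⟩ := exists_isPath_of_reflTransGen
    (reflTransGen_of_wConn hd hr .refl (hir.symm.trans hij))
  exact ⟨p, hp, fun q hq =>
    isPath_unique hd hr hq.1 hp.1 hq.2.1 hp.2.1 (hq.2.2.trans hp.2.2.symm)⟩

theorem IsForest.inDeg_le_one (hF : IsForest F) (j : V) : inDeg F j ≤ 1 := by
  refine inDeg_le_one_iff.2 fun a b ha hb => ?_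
  obtain ⟨r, -, hpaths⟩ := hF j
  obtain ⟨pj, -, hpj⟩ := hpaths j .refl
  have through : ∀ x, (x, j) ∈ F → ∃ p, p.getLast? = some x ∧ p ++ [j] = pj := by
    intro x hx
    obtain ⟨p, ⟨hp, hpr, hpx⟩, -⟩ := hpaths x (.single (Or.inr hx))
    have hp₀ := (isPath_iff.1 hp).1
    refine ⟨p, hpx, hpj _ ⟨(isPath_append_singleton hp₀).2 ⟨hp, by simpa [hpx] using hx⟩, ?_,
      by simp⟩⟩
    rwa [List.head?_append_of_ne_nil _ hp₀]
  obtain ⟨pa, hpa, hpaj⟩ := through a ha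
  obtain ⟨pb, hpb, hpbj⟩ := through b hb
  obtain rfl := List.append_cancel_right (hpaj.trans hpbj.symm)
  simpa [hpa] using hpb

theorem mem_maxForests_iff [Finite V] (hA : CircuitFree A) :
    F ∈ maxForests A ↔ F ⊆ A ∧ ∀ j, inDeg F j = min (inDeg A j) 1 := by
  rw [maxForests, mem_filter, mem_powerset, IsMaxSpanningForest]
  constructor
  · rintro ⟨hFA, -, hF, hmax⟩
    refine ⟨hFA, fun j => ?_⟩
    have h1 := hF.inDeg_le_one j
    have h2 := inDeg_mono hFA j
    by_contra hne
    obtain ⟨x, hx⟩ := one_le_inDeg_iff.1 (show 1 ≤ inDeg A j by omega)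
    have hxF : (x, j) ∉ F := fun h => by have := one_le_inDeg_iff.2 ⟨x, h⟩; omega
    refine hmax _ hx hxF (isForest_of_inDeg_le_one (hA.mono (insert_subset hx hFA)) ?_)
    intro j'
    rw [inDeg_insert hxF]
    split_ifs with h
    · obtain rfl : j = j' := h
      omega
    · exact hF.inDeg_le_one j'
  · rintro ⟨hFA, hdeg⟩
    have hd : ∀ j, inDeg F j ≤ 1 := fun j => (hdeg j).trans_le (min_le_right _ _)
    refine ⟨hFA, hFA, isForest_of_inDeg_le_one (hA.mono hFA) hd, ?_⟩
    rintro ⟨x, j⟩ hxA hxF hins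
    have h1 := hins.inDeg_le_one j
    have h2 := one_le_inDeg_iff.2 ⟨x, hxA⟩
    rw [inDeg_insert hxF, if_pos rfl, hdeg] at h1
    omega

end Forest

theorem sum_comp_div_card_eq_of_card_fiber_const {α β K : Type*} [DecidableEq β] [Semifield K]
    [CharZero K] {s : Finset α} {g : α → β} (f : β → K) {c : ℕ}
    (hc : ∀ b ∈ s.image g, #{a ∈ s | g a = b} = c) :
    (∑ a ∈ s, f (g a)) / #s = (∑ b ∈ s.image g, f b) / #(s.image g) := by
  have hsum : ∑ a ∈ s, f (g a) = c * ∑ b ∈ s.image g, f b := by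
    rw [sum_comp, mul_sum]
    exact sum_congr rfl fun b hb => by rw [hc b hb, nsmul_eq_mul]
  have hcard : #s = c * #(s.image g) := by
    rw [card_eq_sum_card_image g s, sum_congr rfl hc, sum_const,
      smul_eq_mul, mul_comm]
  rcases eq_or_ne c 0 with rfl | hc₀
  · rw [zero_mul, card_eq_zero] at hcard
    simp [hcard]
  · rw [hsum, hcard, Nat.cast_mul, mul_div_mul_left _ _ (Nat.cast_ne_zero.2 hc₀)]

section Fibres

variable {V : Type*} [DecidableEq V] {X F G E : Finset (V × V)} {j : V}

def inArcs (F : Finset (V × V)) (j : V) : Finset (V × V) := F.filter (fun a => a.2 = j)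

def dropInArcs (j : V) (F : Finset (V × V)) : Finset (V × V) := F.filter (fun a => a.2 ≠ j)

lemma mem_inArcs {a : V × V} : a ∈ inArcs F j ↔ a ∈ F ∧ a.2 = j := mem_filter

lemma mem_dropInArcs {a : V × V} : a ∈ dropInArcs j F ↔ a ∈ F ∧ a.2 ≠ j := mem_filter

lemma dropInArcs_subset : dropInArcs j F ⊆ F := filter_subset _ _

lemma card_inArcs : #(inArcs F j) = inDeg F j := rfl

lemma inDeg_dropInArcs (j' : V) :
    inDeg (dropInArcs j F) j' = if j' = j then 0 else inDeg F j' := by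
  rw [inDeg, inDeg, dropInArcs, filter_filter]
  split_ifs with h
  · simp [h]
  · congr 1
    exact filter_congr fun a _ => by constructor <;> grind

lemma dropInArcs_union_inArcs : dropInArcs j F ∪ inArcs F j = F := by
  ext a
  simp only [mem_union, mem_dropInArcs, mem_inArcs]
  tauto

lemma dropInArcs_union (hG : ∀ a ∈ G, a.2 ≠ j) (hE : ∀ a ∈ E, a.2 = j) :
    dropInArcs j (G ∪ E) = G := by
  ext a
  simp only [mem_dropInArcs, mem_union]
  grind

lemma inArcs_union (hG : ∀ a ∈ G, a.2 ≠ j) (hE : ∀ a ∈ E, a.2 = j) :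
    inArcs (G ∪ E) j = E := by
  ext a
  simp only [mem_inArcs, mem_union]
  grind

lemma inDeg_union_of_ne (hE : ∀ a ∈ E, a.2 = j) {j' : V} (hj' : j' ≠ j) :
    inDeg (G ∪ E) j' = inDeg G j' := by
  rw [inDeg, inDeg, filter_union, filter_false_of_mem (s := E) fun a ha => by grind, union_empty]

lemma subset_of_mem_maxForests (hF : F ∈ maxForests X) : F ⊆ X :=
  mem_powerset.1 (mem_filter.1 hF).1

lemma dropInArcs_erase {i : V} : dropInArcs j (X.erase (i, j)) = dropInArcs j X := by
  rw [dropInArcs, filter_erase, erase_eq_of_notMem (by simp)]; rfl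

variable [Finite V]

theorem filter_maxForests_dropInArcs_eq (hX : CircuitFree X)
    (hG : G ∈ maxForests (dropInArcs j X)) :
    {F ∈ maxForests X | dropInArcs j F = G}
      = (powersetCard (min (inDeg X j) 1) (inArcs X j)).image (G ∪ ·) := by
  rw [mem_maxForests_iff (hX.mono dropInArcs_subset)] at hG
  obtain ⟨hGX, hGdeg⟩ := hG
  have hGj : ∀ a ∈ G, a.2 ≠ j := fun a ha => (mem_dropInArcs.1 (hGX ha)).2
  ext F
  simp only [mem_filter, mem_image, mem_powersetCard, mem_maxForests_iff hX]
  constructor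
  · rintro ⟨⟨hFX, hFdeg⟩, rfl⟩
    exact ⟨inArcs F j, ⟨filter_subset_filter _ hFX, hFdeg j⟩, dropInArcs_union_inArcs⟩
  · rintro ⟨E, ⟨hEX, hEcard⟩, rfl⟩
    have hEj : ∀ a ∈ E, a.2 = j := fun a ha => (mem_inArcs.1 (hEX ha)).2
    refine ⟨⟨union_subset (hGX.trans (filter_subset _ _))
      (hEX.trans (filter_subset _ _)), fun j' => ?_⟩, dropInArcs_union hGj hEj⟩
    rcases eq_or_ne j' j with rfl | hj'
    · rw [← card_inArcs, inArcs_union hGj hEj, hEcard]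
    · rw [inDeg_union_of_ne hEj hj', hGdeg, inDeg_dropInArcs, if_neg hj']

theorem card_filter_maxForests_dropInArcs (hX : CircuitFree X)
    (hG : G ∈ maxForests (dropInArcs j X)) :
    #{F ∈ maxForests X | dropInArcs j F = G} = (inDeg X j).choose (min (inDeg X j) 1) := by
  have hGj : ∀ a ∈ G, a.2 ≠ j := fun a ha =>
    (mem_dropInArcs.1 (subset_of_mem_maxForests hG ha)).2
  rw [filter_maxForests_dropInArcs_eq hX hG, card_image_of_injOn, card_powersetCard,
    card_inArcs]
  intro E₁ hE₁ E₂ hE₂ h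
  simp only [mem_coe, mem_powersetCard] at hE₁ hE₂
  have hE₁j : ∀ a ∈ E₁, a.2 = j := fun a ha => (mem_inArcs.1 (hE₁.1 ha)).2
  have hE₂j : ∀ a ∈ E₂, a.2 = j := fun a ha => (mem_inArcs.1 (hE₂.1 ha)).2
  rw [← inArcs_union hGj hE₁j, ← inArcs_union hGj hE₂j]
  exact congrArg (inArcs · j) h

theorem image_dropInArcs_maxForests (hX : CircuitFree X) (j : V) :
    (maxForests X).image (dropInArcs j) = maxForests (dropInArcs j X) := by
  ext G
  constructor
  · intro hG
    obtain ⟨F, hF, rfl⟩ := mem_image.1 hG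
    rw [mem_maxForests_iff hX] at hF
    rw [mem_maxForests_iff (hX.mono dropInArcs_subset)]
    refine ⟨filter_subset_filter _ hF.1, fun j' => ?_⟩
    rw [inDeg_dropInArcs, inDeg_dropInArcs, hF.2]
    split_ifs <;> simp
  · intro hG
    obtain ⟨F, hF⟩ : ({F ∈ maxForests X | dropInArcs j F = G}).Nonempty := by
      rw [filter_maxForests_dropInArcs_eq hX hG]
      exact (powersetCard_nonempty.2 (min_le_left _ _)).image _
    exact mem_image.2 ⟨F, mem_filter.1 hF⟩

end Fibres

section Marginal

variable {V : Type*} [Fintype V] [DecidableEq V] {A F G : Finset (V × V)} {k : V}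

lemma reflTransGen_of_agree (hF : F ⊆ A) (hFG : ∀ a, a.2 ∈ succS A k → (a ∈ F ↔ a ∈ G))
    {x y : V} (hkx : Relation.ReflTransGen (Adj A) k x)
    (hxy : Relation.ReflTransGen (Adj F) x y) : Relation.ReflTransGen (Adj G) x y := by
  induction hxy with
  | refl => exact .refl
  | @tail b d hxb hbd ih =>
    have hkb := hkx.trans (Relation.ReflTransGen.mono (fun _ _ hab => hF hab) _ _ hxb)
    have hd : d ∈ succS A k := by
      simpa [succS] using Relation.TransGen.tail' hkb (hF hbd)
    exact ih.tail ((hFG _ hd).1 hbd)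

section Agree

variable (hF : F ⊆ A) (hG : G ⊆ A) (hFG : ∀ a, a.2 ∈ succS A k → (a ∈ F ↔ a ∈ G))
include hF hG hFG

lemma succSet_eq_of_agree {x : V} (hkx : Relation.ReflTransGen (Adj A) k x) :
    succSet F x = succSet G x := by
  ext y
  simp only [succSet, mem_filter, mem_univ, true_and]
  exact ⟨reflTransGen_of_agree hF hFG hkx,
    reflTransGen_of_agree hG (fun a ha => (hFG a ha).symm) hkx⟩

lemma immSucc_eq_of_agree : immSucc F k = immSucc G k := by
  ext y
  simp only [immSucc, mem_filter, mem_univ, true_and]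
  have hy : ∀ {H}, H ⊆ A → (k, y) ∈ H → y ∈ succS A k := fun hH hky => by
    simpa [succS] using Relation.TransGen.single (hH hky)
  exact ⟨fun h => (hFG _ (hy hF h)).1 h, fun h => (hFG _ (hy hG h)).2 h⟩

lemma marg_eq_of_agree (v : Finset V → ℝ) : marg v F k = marg v G k := by
  rw [marg, marg, succSet_eq_of_agree hF hG hFG .refl, immSucc_eq_of_agree hF hG hFG]
  congr 1
  refine sum_congr rfl fun j hj => congrArg v (succSet_eq_of_agree hF hG hFG (.single (hG ?_)))
  simpa [immSucc] using hj

end Agree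

lemma marg_dropInArcs {j : V} (v : Finset V → ℝ) (hF : F ⊆ A) (hj : j ∉ succS A k) :
    marg v (dropInArcs j F) k = marg v F k :=
  marg_eq_of_agree (dropInArcs_subset.trans hF) hF (fun a ha => by
    simp only [mem_dropInArcs, and_iff_left_iff_imp]
    exact fun _ h => hj (h ▸ ha)) v

end Marginal

theorem AF_locality_general {V : Type*} [Fintype V] [DecidableEq V]
    (A : Finset (V × V)) (hA : CircuitFree A) (v : Finset V → ℝ)
    (i₀ j₀ : V) (ha : (i₀, j₀) ∈ A) (k : V)
    (harcs : localArcs A k = localArcs (A.erase (i₀, j₀)) k) :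
    AF v A k = AF v (A.erase (i₀, j₀)) k := by
  have hj₀ : j₀ ∉ succS A k := fun hj => by
    have h : (i₀, j₀) ∈ localArcs (A.erase (i₀, j₀)) k :=
      harcs ▸ mem_filter.2 ⟨ha, Or.inr hj⟩
    exact notMem_erase _ _ (mem_filter.1 h).1
  have hAF : ∀ X ⊆ A, CircuitFree X →
      AF v X k = (∑ G ∈ maxForests (dropInArcs j₀ X), marg v G k)
        / #(maxForests (dropInArcs j₀ X)) := by
    intro X hXA hX
    rw [← image_dropInArcs_maxForests hX, ← sum_comp_div_card_eq_of_card_fiber_const _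
      fun G hG => card_filter_maxForests_dropInArcs hX (image_dropInArcs_maxForests hX j₀ ▸ hG)]
    refine congrArg (· / _) (sum_congr rfl fun F hF => ?_)
    exact (marg_dropInArcs v ((subset_of_mem_maxForests hF).trans hXA) hj₀).symm
  rw [hAF A subset_rfl hA, hAF _ (erase_subset _ _) (hA.mono (erase_subset _ _)),
    dropInArcs_erase]

/-- locality of the Average Forest measure: if removing the arc `(i₀, j₀)`
does not change the local digraph of `k`, then the AF value of `k` is unchanged. -/
theorem AF_locality {V : Type*} [Fintype V] [DecidableEq V]
    (A : Finset (V × V)) (hA : CircuitFree A) (v : Finset V → ℝ)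
    (i₀ j₀ : V) (ha : (i₀, j₀) ∈ A) (k : V)
    (hnodes : localNodes A k = localNodes (A.erase (i₀, j₀)) k)
    (harcs : localArcs A k = localArcs (A.erase (i₀, j₀)) k) :
    AF v A k = AF v (A.erase (i₀, j₀)) k :=
  AF_locality_general A hA v i₀ j₀ ha k harcs
end
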